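/- arXiv:1502.08013 — 2 statements merged into one kernel-verified Lean document; each statement's English description precedes it below -/
import Mathlib

section
/- For every nonnegative integer n, the Laguerre polynomial L_n(x) expands in Hermite polynomials as L_n(x) = Σ_{k=0}^{n} c_{n,k} H_k(x), where c_{n,k} = ((-n)_k / (2^k (k!)^2)) · Σ_{j=0}^{⌊(n-k)/2⌋} [((k-n)/2)_j ((k+1-n)/2)_j / (((k+1)/2)_j ((k+2)/2)_j)] · (1/4)^j / j!. -/
open Finset

/-- Pochhammer (rising factorial) symbol on the reals. -/
noncomputable def poch (a : ℝ) (n : ℕ) : ℝ := ∏ i ∈ Finset.range n, (a + i)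

/-- Physicists' Hermite polynomial. -/
noncomputable def hermiteP (N : ℕ) (x : ℝ) : ℝ :=
  (N.factorial : ℝ) * ∑ k ∈ Finset.range (N / 2 + 1),
    (-1 : ℝ) ^ k * (2 * x) ^ (N - 2 * k) / ((k.factorial : ℝ) * ((N - 2 * k).factorial : ℝ))

/-- Laguerre polynomial (α = 0). -/
noncomputable def laguerreP (n : ℕ) (x : ℝ) : ℝ :=
  ∑ k ∈ Finset.range (n + 1), poch (-(n : ℝ)) k * x ^ k / ((k.factorial : ℝ)) ^ 2


/-! Inverting the explicit Hermite sum gives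
`x ^ m = m! / 2 ^ m * ∑ i, H_{m-2i}(x) / (i! (m-2i)!)`: substituting the Hermite sum and grouping
the double sum by `s = i + j` leaves `∑_{i+j=s} (-1)^j / (i! j!) = 0 ^ s / s!`, the binomial
expansion of `(1 - 1) ^ s`. Expanding `L_n` monomial by monomial and collecting `H_k`, the
coefficient of `H_k` is a sum over the monomials `x ^ (k + 2i)`; the duplication formula
`(a)_{2i} = 4 ^ i (a/2)_i ((a+1)/2)_i`, applied to `(-n)_{k+2i}` and `(k+2i)! = k! (k+1)_{2i}`,
turns its terms into those of the terminating ₂F₂ series.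
-/

open scoped Nat

lemma poch_succ (a : ℝ) (n : ℕ) : poch a (n + 1) = poch a n * (a + n) :=
  prod_range_succ _ _

lemma poch_add (a : ℝ) (m n : ℕ) : poch a (m + n) = poch a m * poch (a + m) n := by
  simp only [poch, prod_range_add, Nat.cast_add, add_assoc]

lemma poch_two_mul (a : ℝ) (n : ℕ) :
    poch a (2 * n) = 4 ^ n * poch (a / 2) n * poch ((a + 1) / 2) n := by
  induction n with
  | zero => simp [poch]
  | succ n ih =>
    rw [mul_add, mul_one, poch_succ, poch_succ, ih, poch_succ, poch_succ]
    push_cast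
    ring

lemma poch_pos {a : ℝ} (ha : 0 < a) (n : ℕ) : 0 < poch a n :=
  prod_pos fun i _ => by positivity

lemma natCast_factorial_add (k m : ℕ) : ((k + m)! : ℝ) = k ! * poch (k + 1) m := by
  induction m with
  | zero => simp [poch]
  | succ m ih =>
    rw [← add_assoc, Nat.factorial_succ, poch_succ, Nat.cast_mul, ih]
    push_cast
    ring

section Reindex

variable {β : Type*} [AddCommMonoid β]

lemma sum_range_sum_range_div_two_eq_sum_add_two_mul (N : ℕ) (f : ℕ → ℕ → β) :
    ∑ m ∈ range (N + 1), ∑ i ∈ range (m / 2 + 1), f m i =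
      ∑ k ∈ range (N + 1), ∑ i ∈ range ((N - k) / 2 + 1), f (k + 2 * i) i := by
  rw [sum_sigma', sum_sigma']
  refine sum_nbij' (fun p => ⟨p.1 - 2 * p.2, p.2⟩) (fun p => ⟨p.1 + 2 * p.2, p.2⟩)
    ?_ ?_ ?_ ?_ ?_ <;> rintro ⟨m, i⟩ h <;>
    simp only [mem_sigma, mem_range, Sigma.mk.injEq, heq_eq_eq, and_true] at h ⊢
  all_goals first | omega | congr 1; omega

lemma sum_range_sum_range_div_two_eq_sum_antidiagonal (M : ℕ) (g : ℕ → ℕ → β) :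
    ∑ i ∈ range (M / 2 + 1), ∑ j ∈ range ((M - 2 * i) / 2 + 1), g i j =
      ∑ s ∈ range (M / 2 + 1), ∑ p ∈ antidiagonal s, g p.1 p.2 := by
  rw [sum_sigma', sum_sigma']
  refine sum_nbij' (fun p => ⟨p.1 + p.2, (p.1, p.2)⟩) (fun p => ⟨p.2.1, p.2.2⟩)
    ?_ ?_ ?_ ?_ ?_ <;> simp +contextual [HasAntidiagonal.mem_antidiagonal] <;> omega

end Reindex

lemma sum_antidiagonal_neg_one_pow_div_factorial (s : ℕ) :
    ∑ p ∈ antidiagonal s, (-1 : ℝ) ^ p.2 / (p.1 ! * p.2 !) = 0 ^ s / s ! := by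
  have h := (Commute.all (1 : ℝ) (-1)).add_pow' s
  rw [add_neg_cancel] at h
  rw [h, sum_div]
  refine sum_congr rfl fun ⟨i, j⟩ hij => ?_
  rw [HasAntidiagonal.mem_antidiagonal] at hij
  subst hij
  rw [nsmul_eq_mul, one_pow, one_mul, ← Nat.add_choose_mul_factorial_mul_factorial i j,
    Nat.choose_symm_add]
  have := (Nat.choose_pos (Nat.le_add_left j i)).ne'
  push_cast
  field_simp

lemma pow_eq_sum_hermiteP (m : ℕ) (x : ℝ) :
    x ^ m = ∑ i ∈ range (m / 2 + 1),
      (m ! / (2 ^ m * i ! * (m - 2 * i)!) : ℝ) * hermiteP (m - 2 * i) x := by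
  calc x ^ m
      = ∑ s ∈ range (m / 2 + 1),
          m ! / 2 ^ m * ((2 * x) ^ (m - 2 * s) / (m - 2 * s)! * (0 ^ s / s !)) := by
        rw [sum_eq_single_of_mem 0 (by simp) fun s _ hs => by simp [zero_pow hs]]
        simp only [mul_zero, Nat.sub_zero, pow_zero, Nat.factorial_zero, Nat.cast_one]
        field_simp
        rw [mul_pow, mul_comm]
    _ = ∑ s ∈ range (m / 2 + 1), ∑ p ∈ antidiagonal s,
          m ! / 2 ^ m * ((2 * x) ^ (m - 2 * (p.1 + p.2)) / (m - 2 * (p.1 + p.2))! *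
            ((-1) ^ p.2 / (p.1 ! * p.2 !))) := by
        refine sum_congr rfl fun s _ => ?_
        rw [← sum_antidiagonal_neg_one_pow_div_factorial, mul_sum, mul_sum]
        refine sum_congr rfl fun p hp => ?_
        rw [HasAntidiagonal.mem_antidiagonal.1 hp]
    _ = ∑ i ∈ range (m / 2 + 1), ∑ j ∈ range ((m - 2 * i) / 2 + 1),
          m ! / 2 ^ m * ((2 * x) ^ (m - 2 * (i + j)) / (m - 2 * (i + j))! *
            ((-1) ^ j / (i ! * j !))) := by
        rw [sum_range_sum_range_div_two_eq_sum_antidiagonal]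
    _ = _ := by
        refine sum_congr rfl fun i _ => ?_
        rw [hermiteP, mul_sum, mul_sum]
        refine sum_congr rfl fun j _ => ?_
        rw [Nat.sub_sub, ← mul_add]
        field_simp

lemma sum_mul_pow_eq_sum_hermiteP (a : ℕ → ℝ) (N : ℕ) (x : ℝ) :
    ∑ m ∈ range (N + 1), a m * x ^ m =
      ∑ k ∈ range (N + 1), (∑ i ∈ range ((N - k) / 2 + 1),
        a (k + 2 * i) * (k + 2 * i)! / (2 ^ (k + 2 * i) * i ! * k !)) * hermiteP k x := by
  simp_rw [pow_eq_sum_hermiteP _ x, mul_sum]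
  rw [sum_range_sum_range_div_two_eq_sum_add_two_mul]
  refine sum_congr rfl fun k _ => ?_
  rw [sum_mul]
  refine sum_congr rfl fun i _ => ?_
  rw [Nat.add_sub_cancel]
  ring

lemma laguerre_hermite_coeff_eq (n k i : ℕ) :
    poch (-n) (k + 2 * i) / ((k + 2 * i)! : ℝ) ^ 2 * (k + 2 * i)! /
        (2 ^ (k + 2 * i) * i ! * k !) =
      poch (-n) k / (2 ^ k * (k ! : ℝ) ^ 2) *
        (poch ((k - n) / 2) i * poch ((k + 1 - n) / 2) i /
          (poch ((k + 1) / 2) i * poch ((k + 2) / 2) i) * (1 / 4) ^ i / i !) := by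
  have hnum : poch (-n) (k + 2 * i) =
      poch (-n) k * (4 ^ i * poch ((k - n) / 2) i * poch ((k + 1 - n) / 2) i) := by
    rw [poch_add, poch_two_mul, neg_add_eq_sub, sub_add_eq_add_sub]
  have hden :
      ((k + 2 * i)! : ℝ) = k ! * (4 ^ i * poch ((k + 1) / 2) i * poch ((k + 2) / 2) i) := by
    rw [natCast_factorial_add, poch_two_mul, add_assoc, one_add_one_eq_two]
  have hpow : (2 : ℝ) ^ (k + 2 * i) = 2 ^ k * 4 ^ i := by
    rw [pow_add, pow_mul]
    norm_num
  have h₁ := (poch_pos (a := (k + 1) / 2) (by positivity) i).ne'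
  have h₂ := (poch_pos (a := (k + 2) / 2) (by positivity) i).ne'
  rw [hnum, hden, hpow, one_div_pow]
  field_simp

/-- Connection formula for Laguerre polynomials in series of Hermite polynomials. -/
theorem laguerre_in_hermite (n : ℕ) (x : ℝ) :
    laguerreP n x =
      ∑ k ∈ Finset.range (n + 1),
        (poch (-(n : ℝ)) k / (2 ^ k * ((k.factorial : ℝ)) ^ 2)) *
          (∑ j ∈ Finset.range ((n - k) / 2 + 1),
            (poch (((k : ℝ) - n) / 2) j * poch (((k : ℝ) + 1 - n) / 2) j /
              (poch (((k : ℝ) + 1) / 2) j * poch (((k : ℝ) + 2) / 2) j)) *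
            (1 / 4 : ℝ) ^ j / (j.factorial : ℝ)) *
          hermiteP k x := by
  simp_rw [laguerreP, mul_div_right_comm _ (x ^ _), sum_mul_pow_eq_sum_hermiteP,
    laguerre_hermite_coeff_eq, ← mul_sum]
end

section
/- (Fields–Ismail expansion, finite version.) Let c be a complex number that is not a nonpositive integer, and let (a_m) and (b_m) be sequences with b_m = 0 for m > M. Then for all z, w: Σ_{m=0}^{M} a_m b_m (zw)^m = Σ_{n=0}^{M} ((c)_n (-z)^n / n!) · (Σ_{j=0}^{M-n} ((n+c)_j / j!) b_{n+j} z^j) · (Σ_{k=0}^{n} ((-n)_k / (c)_k) a_k w^k). -/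
open Finset

/-- Pochhammer (rising factorial) symbol on the complex numbers. -/
noncomputable def pochC (a : ℂ) (n : ℕ) : ℂ := ∏ i ∈ Finset.range n, (a + i)

lemma pochC_succ (a : ℂ) (n : ℕ) : pochC a (n + 1) = pochC a n * (a + n) := by
  simp [pochC, Finset.prod_range_succ]

lemma pochC_add (a : ℂ) (m n : ℕ) : pochC a (m + n) = pochC a m * pochC (a + m) n := by
  unfold pochC
  rw [Finset.prod_range_add]
  congr 1
  refine Finset.prod_congr rfl fun i _ => ?_
  push_cast
  ring

lemma pochC_ne_zero (c : ℂ) (hc : ∀ k : ℕ, c ≠ -(k : ℂ)) (k : ℕ) : pochC c k ≠ 0 := by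
  refine Finset.prod_ne_zero_iff.2 fun i _ => ?_
  intro h
  exact hc i (eq_neg_of_add_eq_zero_left h)

lemma pochC_neg_of_lt (n k : ℕ) (h : n < k) : pochC (-(n : ℂ)) k = 0 :=
  Finset.prod_eq_zero (Finset.mem_range.2 h) (by simp)

lemma pochC_neg_eq (n k : ℕ) (h : k ≤ n) :
    pochC (-(n : ℂ)) k = (-1) ^ k * (n.descFactorial k : ℂ) := by
  induction k with
  | zero => simp [pochC]
  | succ k ih =>
    have hk : k ≤ n := Nat.le_of_succ_le h
    have hcast : (-(n : ℂ) + k) = -((n - k : ℕ) : ℂ) := by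
      rw [Nat.cast_sub hk]; ring
    rw [pochC_succ, ih hk, Nat.descFactorial_succ, hcast]
    push_cast
    ring

lemma key (k d : ℕ) :
    ∑ n ∈ Finset.Icc k (k + d),
        (-1 : ℂ) ^ n * pochC (-(n : ℂ)) k / ((n.factorial : ℂ) * (((k + d) - n).factorial : ℂ))
      = if k + d = k then 1 else 0 := by
  have hIcc : Finset.Icc k (k + d) = Finset.Ico k (k + d + 1) := by
    rw [Finset.Ico_add_one_right_eq_Icc]
  rw [hIcc, Finset.sum_Ico_eq_sum_range]
  have hrange : k + d + 1 - k = d + 1 := by omega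
  rw [hrange]
  have hterm : ∀ t ∈ Finset.range (d + 1),
      (-1 : ℂ) ^ (k + t) * pochC (-((k + t : ℕ) : ℂ)) k /
          (((k + t).factorial : ℂ) * (((k + d) - (k + t)).factorial : ℂ))
        = ((-1 : ℂ) ^ t * (d.choose t : ℂ)) / (d.factorial : ℂ) := by
    intro t ht
    have htd : t ≤ d := by simpa using Nat.lt_succ_iff.mp (Finset.mem_range.mp ht)
    have hsub : (k + d) - (k + t) = d - t := by omega
    rw [hsub, pochC_neg_eq _ _ (Nat.le_add_right k t)]
    have hdf : (t.factorial : ℂ) * ((k + t).descFactorial k : ℂ) = ((k + t).factorial : ℂ) := by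
      exact_mod_cast congrArg (Nat.cast (R := ℂ))
        (by simpa using Nat.factorial_mul_descFactorial (Nat.le_add_right k t))
    have hch : (d.choose t : ℂ) * (t.factorial : ℂ) * ((d - t).factorial : ℂ)
        = (d.factorial : ℂ) := by
      exact_mod_cast congrArg (Nat.cast (R := ℂ)) (Nat.choose_mul_factorial_mul_factorial htd)
    have h1 : ((k + t).factorial : ℂ) ≠ 0 := Nat.cast_ne_zero.2 (Nat.factorial_ne_zero _)
    have h2 : ((d - t).factorial : ℂ) ≠ 0 := Nat.cast_ne_zero.2 (Nat.factorial_ne_zero _)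
    have h3 : (d.factorial : ℂ) ≠ 0 := Nat.cast_ne_zero.2 (Nat.factorial_ne_zero _)
    have h4 : (t.factorial : ℂ) ≠ 0 := Nat.cast_ne_zero.2 (Nat.factorial_ne_zero _)
    have hpow : (-1 : ℂ) ^ (k + t) * (-1) ^ k = (-1) ^ t := by
      rw [← pow_add, show k + t + k = 2 * k + t by ring, pow_add, pow_mul]
      norm_num
    rw [div_eq_div_iff (by exact mul_ne_zero h1 h2) h3]
    linear_combination (-((-1:ℂ)^(k+t) * (-1:ℂ)^k * ((k + t).descFactorial k : ℂ))) * hch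
      + ((-1:ℂ)^t * (d.choose t : ℂ) * ((d - t).factorial : ℂ)) * hdf
      + (((k + t).descFactorial k : ℂ) * (d.choose t : ℂ) * (t.factorial : ℂ) * ((d - t).factorial : ℂ)) * hpow
  rw [Finset.sum_congr rfl hterm, ← Finset.sum_div]
  have halt := Int.alternating_sum_range_choose (n := d)
  have h2 : (∑ t ∈ Finset.range (d + 1), (-1 : ℂ) ^ t * (d.choose t : ℂ))
      = ((if d = 0 then 1 else 0 : ℤ) : ℂ) := by
    rw [← halt]; push_cast; rfl
  rw [h2]
  have hd0 : k + d = k ↔ d = 0 := by omega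
  by_cases hd : d = 0 <;> simp [hd, hd0]


/-- Fields–Ismail expansion (formula (3.2)), finite version for finitely supported `b`. -/
theorem fields_ismail_finite (c : ℂ) (hc : ∀ k : ℕ, c ≠ -(k : ℂ)) (M : ℕ)
    (a b : ℕ → ℂ) (hb : ∀ m, M < m → b m = 0) (z w : ℂ) :
    (∑ m ∈ Finset.range (M + 1), a m * b m * (z * w) ^ m) =
      ∑ n ∈ Finset.range (M + 1),
        (pochC c n * (-z) ^ n / (n.factorial : ℂ)) *
        (∑ j ∈ Finset.range (M - n + 1), (pochC ((n : ℂ) + c) j / (j.factorial : ℂ)) * b (n + j) * z ^ j) *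
        (∑ k ∈ Finset.range (n + 1), (pochC (-(n : ℂ)) k / pochC c k) * a k * w ^ k) := by
  symm
  have fact_ne : ∀ n : ℕ, ((n.factorial : ℂ)) ≠ 0 := fun n => Nat.cast_ne_zero.2 (Nat.factorial_ne_zero n)
  -- abbreviations
  set G : ℕ → ℕ → ℂ := fun n m =>
    (-1 : ℂ) ^ n * pochC c m * z ^ m * b m / ((n.factorial : ℂ) * ((m - n).factorial : ℂ)) with hG
  set C' : ℕ → ℕ → ℂ := fun n k => pochC (-(n : ℂ)) k / pochC c k * a k * w ^ k with hC'
  have step1 :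
      (∑ n ∈ Finset.range (M + 1),
        (pochC c n * (-z) ^ n / (n.factorial : ℂ)) *
        (∑ j ∈ Finset.range (M - n + 1), (pochC ((n : ℂ) + c) j / (j.factorial : ℂ)) * b (n + j) * z ^ j) *
        (∑ k ∈ Finset.range (n + 1), (pochC (-(n : ℂ)) k / pochC c k) * a k * w ^ k))
      = ∑ n ∈ Finset.range (M + 1), ∑ m ∈ Finset.Icc n M, ∑ k ∈ Finset.range (M + 1),
          G n m * C' n k := by
    refine Finset.sum_congr rfl fun n hn => ?_
    have hnM : n ≤ M := Nat.lt_succ_iff.mp (Finset.mem_range.mp hn)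
    have hK : (∑ k ∈ Finset.range (n + 1), (pochC (-(n : ℂ)) k / pochC c k) * a k * w ^ k)
        = ∑ k ∈ Finset.range (M + 1), C' n k := by
      refine Finset.sum_subset (Finset.range_subset_range.2 (by omega)) fun k hk hk' => ?_
      have : n < k := by
        simp only [Finset.mem_range] at hk hk'
        omega
      simp [hC', pochC_neg_of_lt n k this]
    have hAB : (pochC c n * (-z) ^ n / (n.factorial : ℂ)) *
        (∑ j ∈ Finset.range (M - n + 1), (pochC ((n : ℂ) + c) j / (j.factorial : ℂ)) * b (n + j) * z ^ j)
        = ∑ m ∈ Finset.Icc n M, G n m := by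
      rw [Finset.mul_sum, show Finset.Icc n M = Finset.Ico n (M + 1) from (Finset.Ico_add_one_right_eq_Icc n M).symm,
        Finset.sum_Ico_eq_sum_range, show M + 1 - n = M - n + 1 by omega]
      refine Finset.sum_congr rfl fun j hj => ?_
      have e1 : pochC c (n + j) = pochC c n * pochC ((n : ℂ) + c) j := by
        rw [pochC_add, add_comm c (n : ℂ)]
      simp only [hG]
      rw [show n + j - n = j by omega, e1, neg_pow, pow_add]
      field_simp
    rw [hK, hAB, Finset.sum_mul]
    exact Finset.sum_congr rfl fun m _ => Finset.mul_sum _ _ _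
  rw [step1]
  rw [Finset.sum_comm' (t' := Finset.range (M + 1)) (s' := fun m => Finset.range (m + 1))
    (by intro x y; simp only [Finset.mem_range, Finset.mem_Icc, Nat.lt_succ_iff]; omega)]
  have step4 : ∀ m ∈ Finset.range (M + 1),
      (∑ n ∈ Finset.range (m + 1), ∑ k ∈ Finset.range (M + 1), G n m * C' n k)
      = a m * b m * (z * w) ^ m := by
    intro m hm
    have hmM : m ≤ M := Nat.lt_succ_iff.mp (Finset.mem_range.mp hm)
    rw [Finset.sum_comm]
    have inner : ∀ k ∈ Finset.range (M + 1),
        (∑ n ∈ Finset.range (m + 1), G n m * C' n k)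
        = (pochC c m * z ^ m * b m * a k * w ^ k / pochC c k) * (if m = k then 1 else 0) := by
      intro k _
      have hsub : (∑ n ∈ Finset.Icc k m, G n m * C' n k) = ∑ n ∈ Finset.range (m + 1), G n m * C' n k := by
        refine Finset.sum_subset (fun x hx => ?_) fun n hn hn' => ?_
        · simp only [Finset.mem_Icc] at hx
          simp only [Finset.mem_range]
          omega
        · have : n < k := by
            simp only [Finset.mem_range] at hn
            simp only [Finset.mem_Icc] at hn'
            omega
          simp [hC', pochC_neg_of_lt n k this]
      rw [← hsub]
      have hfac : ∀ n, G n m * C' n k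
          = (pochC c m * z ^ m * b m * a k * w ^ k / pochC c k) *
            ((-1 : ℂ) ^ n * pochC (-(n : ℂ)) k / ((n.factorial : ℂ) * ((m - n).factorial : ℂ))) := by
        intro n
        simp only [hG, hC']
        ring
      rw [Finset.sum_congr rfl fun n _ => hfac n, ← Finset.mul_sum]
      congr 1
      by_cases hkm : k ≤ m
      · have := key k (m - k)
        rw [show k + (m - k) = m by omega] at this
        exact this
      · rw [Finset.Icc_eq_empty (by omega), Finset.sum_empty, if_neg (by omega)]
    rw [Finset.sum_congr rfl inner]
    have : ∀ k ∈ Finset.range (M + 1),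
        (pochC c m * z ^ m * b m * a k * w ^ k / pochC c k) * (if m = k then 1 else 0)
        = if m = k then pochC c m * z ^ m * b m * a k * w ^ k / pochC c k else 0 := by
      intro k _
      split <;> simp
    rw [Finset.sum_congr rfl this, Finset.sum_ite_eq, if_pos hm]
    have hp := pochC_ne_zero c hc m
    field_simp
    ring
  rw [Finset.sum_congr rfl step4]
end
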